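/- arXiv:1601.03622 — 2 statements merged into one kernel-verified Lean document; each statement's English description precedes it below -/
import Mathlib

section
/- Work in the polynomial ring ℚ[x_2, x_3, x_4] and let ĝ(ζ) := ζ + x_2ζ^3 + x_3ζ^4 + x_4ζ^5 ∈ ℚ[x_2,x_3,x_4][[ζ]]. Define Δ̂_1(ζ) := ĝ(ζ) − ζ and Δ̂_{m+1}(ζ) := Δ̂_m(ĝ(ζ)) − Δ̂_m(ζ) for m ≥ 1, and for each m ≥ 1 let A_m, B_m, C_m ∈ ℚ[x_2,x_3,x_4] be the coefficients of ζ^{2m+1}, ζ^{2m+2}, ζ^{2m+3} in Δ̂_m. Then for every m ≥ 1: (i) ord(Δ̂_m) ≥ 2m+1; (ii) A_1 = x_2, B_1 = x_3, C_1 = x_4; and (iii) A_{m+1} = (2m+1)x_2·A_m, B_{m+1} = (2m+1)x_3·A_m + (2m+2)x_2·B_m, and C_{m+1} = (2m+1)(m·x_2^2 + x_4)·A_m + (2m+2)x_3·B_m + (2m+3)x_2·C_m. -/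
/-- Composition of formal power series: `f.comp g = f ∘ g`, the power series obtained by
substituting `g` into `f`.  (This gives the usual composition whenever the constant
coefficient of `g` is zero.) -/
noncomputable def PowerSeries.comp {R : Type*} [CommSemiring R] (f g : PowerSeries R) :
    PowerSeries R :=
  PowerSeries.mk fun n =>
    ∑ i ∈ Finset.range (n + 1), PowerSeries.coeff (R := R) i f * PowerSeries.coeff (R := R) n (g ^ i)

/-- The polynomial ring `ℚ[x₂, x₃, x₄]`, with `x₂ = X 0`, `x₃ = X 1`, `x₄ = X 2`. -/
abbrev Rq : Type := MvPolynomial (Fin 3) ℚ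

/-- The power series `ĝ(ζ) = ζ + x₂ζ³ + x₃ζ⁴ + x₄ζ⁵` over `ℚ[x₂, x₃, x₄]`. -/
noncomputable def ghat : PowerSeries Rq :=
  PowerSeries.X
    + PowerSeries.C (R := Rq) (MvPolynomial.X 0) * PowerSeries.X ^ 3
    + PowerSeries.C (R := Rq) (MvPolynomial.X 1) * PowerSeries.X ^ 4
    + PowerSeries.C (R := Rq) (MvPolynomial.X 2) * PowerSeries.X ^ 5

/-!
Write `ĝ = ζ·u` with `u = 1 + x₂ζ² + x₃ζ³ + x₄ζ⁴`, so that `f(ĝ) = ∑ fᵢ ζⁱ uⁱ`. Since `u ≡ 1`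
modulo `ζ²`, the low coefficients of `uⁱ` are polynomial in `i`: `1, 0, i·u₂, i·u₃,
i·u₄ + C(i,2)·u₂²`. Hence if `ord f ≥ n`, then `f(ĝ) - f` has order `≥ n + 2`, and its coefficients
in degrees `n + 2, n + 3, n + 4` are explicit combinations of `fₙ, fₙ₊₁, fₙ₊₂`. Taking
`f = Δ̂ₘ` and `n = 2m + 1` gives the order bound by induction and the recurrences, with
`C(2m+1, 2) = (2m+1)·m`.
-/
open Finset

namespace PowerSeries

variable {R : Type*}

section CommSemiring

variable [CommSemiring R] {f u : R⟦X⟧}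

theorem coeff_comp_X_mul (f u : R⟦X⟧) (d : ℕ) :
    coeff d (f.comp ((X : R⟦X⟧) * u)) =
      ∑ i ∈ range (d + 1), coeff i f * coeff (d - i) (u ^ i) := by
  rw [comp, coeff_mk]
  refine sum_congr rfl fun i hi => ?_
  rw [mul_pow, coeff_X_pow_mul', if_pos (Nat.lt_succ_iff.mp (mem_range.mp hi))]

theorem coeff_comp_X_mul_of_lt {n d : ℕ} (hf : n ≤ f.order) (hd : d < n) :
    coeff d (f.comp ((X : R⟦X⟧) * u)) = 0 := by
  rw [coeff_comp_X_mul]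
  refine sum_eq_zero fun i hi => ?_
  have hin : i < n := (mem_range.mp hi).trans_le hd
  rw [coeff_of_lt_order i ((Nat.cast_lt.mpr hin).trans_le hf), zero_mul]

theorem coeff_add_comp_X_mul {n : ℕ} (hf : n ≤ f.order) (j : ℕ) :
    coeff (n + j) (f.comp ((X : R⟦X⟧) * u)) =
      ∑ k ∈ range (j + 1), coeff (n + k) f * coeff (j - k) (u ^ (n + k)) := by
  rw [coeff_comp_X_mul, show n + j + 1 = n + (j + 1) by omega, sum_range_add,
    sum_eq_zero fun i hi => by
      rw [coeff_of_lt_order i ((Nat.cast_lt.mpr (mem_range.mp hi)).trans_le hf), zero_mul],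
    zero_add]
  exact sum_congr rfl fun k _ => by rw [Nat.add_sub_add_left]

theorem coeff_pow_succ_eq_sum (u : R⟦X⟧) (i d : ℕ) :
    coeff d (u ^ (i + 1)) = ∑ k ∈ range (d + 1), coeff k (u ^ i) * coeff (d - k) u := by
  rw [pow_succ, coeff_mul, Nat.sum_antidiagonal_eq_sum_range_succ_mk]

theorem coeff_one_pow_of_coeff_one_eq_zero (h1 : coeff 1 u = 0) (i : ℕ) :
    coeff 1 (u ^ i) = 0 := by
  simp [coeff_one_pow, h1]

variable (h0 : constantCoeff u = 1) (h1 : coeff 1 u = 0)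
include h0 h1

theorem coeff_two_pow_of_coeff_one_eq_zero (i : ℕ) : coeff 2 (u ^ i) = i * coeff 2 u := by
  induction i with
  | zero => simp [coeff_one]
  | succ i ih =>
    simp only [coeff_pow_succ_eq_sum, sum_range_succ, sum_range_zero, Nat.reduceSub,
      coeff_zero_eq_constantCoeff_apply, map_pow, h0, one_pow,
      coeff_one_pow_of_coeff_one_eq_zero h1, h1, ih]
    push_cast; ring

theorem coeff_three_pow_of_coeff_one_eq_zero (i : ℕ) : coeff 3 (u ^ i) = i * coeff 3 u := by
  induction i with
  | zero => simp [coeff_one]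
  | succ i ih =>
    simp only [coeff_pow_succ_eq_sum, sum_range_succ, sum_range_zero, Nat.reduceSub,
      coeff_zero_eq_constantCoeff_apply, map_pow, h0, one_pow,
      coeff_one_pow_of_coeff_one_eq_zero h1, h1, ih]
    push_cast; ring

theorem coeff_four_pow_of_coeff_one_eq_zero (i : ℕ) :
    coeff 4 (u ^ i) = i * coeff 4 u + i.choose 2 * coeff 2 u ^ 2 := by
  induction i with
  | zero => simp [coeff_one]
  | succ i ih =>
    simp only [coeff_pow_succ_eq_sum, sum_range_succ, sum_range_zero, Nat.reduceSub,
      coeff_zero_eq_constantCoeff_apply, map_pow, h0, one_pow,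
      coeff_one_pow_of_coeff_one_eq_zero h1, h1,
      coeff_two_pow_of_coeff_one_eq_zero h0 h1, coeff_three_pow_of_coeff_one_eq_zero h0 h1, ih,
      Nat.choose_succ_succ i 1, Nat.choose_one_right]
    push_cast; ring

end CommSemiring

section CommRing

variable [CommRing R] {f u : R⟦X⟧} {n : ℕ}
variable (h0 : constantCoeff u = 1) (h1 : coeff 1 u = 0) (hf : n ≤ f.order)
include h0 h1 hf

theorem le_order_comp_X_mul_sub_self : ((n + 2 : ℕ) : ℕ∞) ≤ (f.comp (X * u) - f).order := by
  refine nat_le_order _ _ fun d hd => ?_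
  rw [map_sub]
  rcases lt_or_ge d n with hdn | hdn
  · rw [coeff_comp_X_mul_of_lt hf hdn,
      coeff_of_lt_order d ((Nat.cast_lt.mpr hdn).trans_le hf), sub_zero]
  · obtain ⟨j, rfl⟩ := Nat.exists_eq_add_of_le hdn
    rw [coeff_add_comp_X_mul hf]
    obtain rfl | rfl : j = 0 ∨ j = 1 := by omega
    all_goals
      simp [sum_range_succ, coeff_zero_eq_constantCoeff_apply, h0,
        coeff_one_pow_of_coeff_one_eq_zero h1]

theorem coeff_add_two_comp_X_mul_sub_self :
    coeff (n + 2) (f.comp (X * u) - f) = n * coeff 2 u * coeff n f := by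
  rw [map_sub, coeff_add_comp_X_mul hf]
  simp only [sum_range_succ, sum_range_zero, Nat.reduceSub, add_zero,
    coeff_zero_eq_constantCoeff_apply, map_pow, h0, one_pow, coeff_one_pow_of_coeff_one_eq_zero h1,
    coeff_two_pow_of_coeff_one_eq_zero h0 h1]
  ring

theorem coeff_add_three_comp_X_mul_sub_self :
    coeff (n + 3) (f.comp (X * u) - f) =
      n * coeff 3 u * coeff n f + (n + 1 : ℕ) * coeff 2 u * coeff (n + 1) f := by
  rw [map_sub, coeff_add_comp_X_mul hf]
  simp only [sum_range_succ, sum_range_zero, Nat.reduceSub, add_zero,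
    coeff_zero_eq_constantCoeff_apply, map_pow, h0, one_pow, coeff_one_pow_of_coeff_one_eq_zero h1,
    coeff_two_pow_of_coeff_one_eq_zero h0 h1, coeff_three_pow_of_coeff_one_eq_zero h0 h1]
  ring

theorem coeff_add_four_comp_X_mul_sub_self :
    coeff (n + 4) (f.comp (X * u) - f) =
      (n * coeff 4 u + n.choose 2 * coeff 2 u ^ 2) * coeff n f
        + (n + 1 : ℕ) * coeff 3 u * coeff (n + 1) f
        + (n + 2 : ℕ) * coeff 2 u * coeff (n + 2) f := by
  rw [map_sub, coeff_add_comp_X_mul hf]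
  simp only [sum_range_succ, sum_range_zero, Nat.reduceSub, add_zero,
    coeff_zero_eq_constantCoeff_apply, map_pow, h0, one_pow, coeff_one_pow_of_coeff_one_eq_zero h1,
    coeff_two_pow_of_coeff_one_eq_zero h0 h1, coeff_three_pow_of_coeff_one_eq_zero h0 h1,
    coeff_four_pow_of_coeff_one_eq_zero h0 h1]
  push_cast
  ring

end CommRing

end PowerSeries

open PowerSeries

noncomputable def ghatDivX : PowerSeries Rq :=
  1 + C (MvPolynomial.X 0) * X ^ 2 + C (MvPolynomial.X 1) * X ^ 3 + C (MvPolynomial.X 2) * X ^ 4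

theorem ghat_eq_X_mul : ghat = X * ghatDivX := by
  unfold ghat ghatDivX
  ring

theorem constantCoeff_ghatDivX : constantCoeff ghatDivX = 1 := by
  simp [ghatDivX]

theorem coeff_one_ghatDivX : coeff 1 ghatDivX = 0 := by
  simp [ghatDivX, coeff_X_pow, coeff_one]

theorem coeff_two_ghatDivX : coeff 2 ghatDivX = MvPolynomial.X 0 := by
  simp [ghatDivX, coeff_X_pow, coeff_one]

theorem coeff_three_ghatDivX : coeff 3 ghatDivX = MvPolynomial.X 1 := by
  simp [ghatDivX, coeff_X_pow, coeff_one]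

theorem coeff_four_ghatDivX : coeff 4 ghatDivX = MvPolynomial.X 2 := by
  simp [ghatDivX, coeff_X_pow, coeff_one]

theorem Nat.choose_two_two_mul_add_one (m : ℕ) : (2 * m + 1).choose 2 = (2 * m + 1) * m := by
  rw [Nat.choose_two_right, Nat.add_sub_cancel, mul_left_comm, Nat.mul_div_cancel_left _ two_pos]

theorem delta_hat_coefficient_recurrences
    (Δ : ℕ → PowerSeries Rq)
    (hΔ1 : Δ 1 = ghat - PowerSeries.X)
    (hΔ : ∀ m : ℕ, 1 ≤ m → Δ (m + 1) = PowerSeries.comp (Δ m) ghat - Δ m) :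
    (∀ m : ℕ, 1 ≤ m → ((2 * m + 1 : ℕ) : ℕ∞) ≤ (Δ m).order) ∧
    (PowerSeries.coeff (R := Rq) 3 (Δ 1) = MvPolynomial.X 0 ∧
      PowerSeries.coeff (R := Rq) 4 (Δ 1) = MvPolynomial.X 1 ∧
      PowerSeries.coeff (R := Rq) 5 (Δ 1) = MvPolynomial.X 2) ∧
    (∀ m : ℕ, 1 ≤ m →
      PowerSeries.coeff (R := Rq) (2 * (m + 1) + 1) (Δ (m + 1)) =
        ((2 * m + 1 : ℕ) : Rq) * MvPolynomial.X 0 * PowerSeries.coeff (R := Rq) (2 * m + 1) (Δ m) ∧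
      PowerSeries.coeff (R := Rq) (2 * (m + 1) + 2) (Δ (m + 1)) =
        ((2 * m + 1 : ℕ) : Rq) * MvPolynomial.X 1 * PowerSeries.coeff (R := Rq) (2 * m + 1) (Δ m)
          + ((2 * m + 2 : ℕ) : Rq) * MvPolynomial.X 0 *
              PowerSeries.coeff (R := Rq) (2 * m + 2) (Δ m) ∧
      PowerSeries.coeff (R := Rq) (2 * (m + 1) + 3) (Δ (m + 1)) =
        ((2 * m + 1 : ℕ) : Rq) * ((m : Rq) * MvPolynomial.X 0 ^ 2 + MvPolynomial.X 2) *
              PowerSeries.coeff (R := Rq) (2 * m + 1) (Δ m)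
          + ((2 * m + 2 : ℕ) : Rq) * MvPolynomial.X 1 *
              PowerSeries.coeff (R := Rq) (2 * m + 2) (Δ m)
          + ((2 * m + 3 : ℕ) : Rq) * MvPolynomial.X 0 *
              PowerSeries.coeff (R := Rq) (2 * m + 3) (Δ m)) := by
  have hord : ∀ m : ℕ, 1 ≤ m → ((2 * m + 1 : ℕ) : ℕ∞) ≤ (Δ m).order := by
    intro m hm
    induction m, hm using Nat.le_induction with
    | base =>
      rw [hΔ1]
      exact nat_le_order _ _ fun i hi => by interval_cases i <;> simp [ghat, coeff_X_pow, coeff_X]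
    | succ m hm ih =>
      rw [hΔ m hm, ghat_eq_X_mul]
      exact le_order_comp_X_mul_sub_self constantCoeff_ghatDivX coeff_one_ghatDivX ih
  refine ⟨hord, by simp [hΔ1, ghat, coeff_X_pow, coeff_X], fun m hm => ?_⟩
  have h0 := constantCoeff_ghatDivX
  have h1 := coeff_one_ghatDivX
  rw [hΔ m hm, ghat_eq_X_mul]
  refine ⟨?_, ?_, ?_⟩
  · rw [show 2 * (m + 1) + 1 = 2 * m + 1 + 2 by ring,
      coeff_add_two_comp_X_mul_sub_self h0 h1 (hord m hm), coeff_two_ghatDivX]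
  · rw [show 2 * (m + 1) + 2 = 2 * m + 1 + 3 by ring,
      coeff_add_three_comp_X_mul_sub_self h0 h1 (hord m hm)]
    simp only [coeff_two_ghatDivX, coeff_three_ghatDivX]
  · rw [show 2 * (m + 1) + 3 = 2 * m + 1 + 4 by ring,
      coeff_add_four_comp_X_mul_sub_self h0 h1 (hord m hm), Nat.choose_two_two_mul_add_one]
    simp only [coeff_two_ghatDivX, coeff_three_ghatDivX, coeff_four_ghatDivX]
    push_cast
    ring
end

section
/- Work in the polynomial ring ℚ[x_2, x_3, x_4] and let ĝ(ζ) := ζ + x_2ζ^3 + x_3ζ^4 + x_4ζ^5 ∈ ℚ[x_2,x_3,x_4][[ζ]]. Define Δ̂_1(ζ) := ĝ(ζ) − ζ and Δ̂_{m+1}(ζ) := Δ̂_m(ĝ(ζ)) − Δ̂_m(ζ) for m ≥ 1. Then for every m ≥ 1, the coefficient of ζ^{2m+2} in Δ̂_m equals x_2^{m−1}·x_3·((2m+1)!! − (2m)!!). -/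
open Nat

namespace PowerSeries

open scoped PowerSeries

variable {R : Type*} [CommRing R]

theorem coeff_pow_of_constantCoeff_eq_one {u : R⟦X⟧} (hu0 : constantCoeff u = 1)
    (hu1 : coeff 1 u = 0) (i : ℕ) :
    coeff 1 (u ^ i) = 0 ∧ coeff 2 (u ^ i) = i * coeff 2 u ∧ coeff 3 (u ^ i) = i * coeff 3 u := by
  induction i with
  | zero => simp [coeff_one]
  | succ k ih =>
    obtain ⟨h1, h2, h3⟩ := ih
    have h0 : coeff 0 (u ^ k) = 1 := by simp [hu0]
    have hu0' : coeff 0 u = 1 := by simpa using hu0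
    rw [pow_succ]
    refine ⟨?_, ?_, ?_⟩ <;>
      simp only [coeff_mul, Finset.Nat.sum_antidiagonal_eq_sum_range_succ_mk, Finset.sum_range_succ,
        Finset.sum_range_zero, h0, h1, h2, h3, hu0', hu1] <;>
      push_cast <;> ring

variable {g : R⟦X⟧}

theorem coeff_add_comp_of_X_pow_dvd {f : R⟦X⟧} {n : ℕ} (hf : X ^ n ∣ f) (k : ℕ) :
    coeff (n + k) (f.comp g) =
      ∑ j ∈ Finset.range (k + 1), coeff (n + j) f * coeff (n + k) (g ^ (n + j)) := by
  rw [comp, coeff_mk, add_assoc, Finset.sum_range_add, add_eq_right]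
  exact Finset.sum_eq_zero fun i hi ↦ by
    rw [X_pow_dvd_iff.mp hf i (Finset.mem_range.mp hi), zero_mul]

variable (hg0 : constantCoeff g = 0)
include hg0

theorem coeff_pow_add_eq_coeff_shift_pow (i k : ℕ) :
    coeff (i + k) (g ^ i) = coeff k ((mk fun p => coeff (p + 1) g) ^ i) := by
  conv_lhs => rw [eq_X_mul_shift_add_const g, hg0, map_zero, add_zero, mul_pow, add_comm,
    coeff_X_pow_mul]

variable (hg1 : coeff 1 g = 1)
include hg1

theorem coeff_pow_self (i : ℕ) : coeff i (g ^ i) = 1 := by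
  simpa [hg1] using coeff_pow_add_eq_coeff_shift_pow hg0 i 0

variable (hg2 : coeff 2 g = 0)
include hg2

theorem coeff_pow_add_one_two_three (i : ℕ) :
    coeff (i + 1) (g ^ i) = 0 ∧ coeff (i + 2) (g ^ i) = i * coeff 3 g ∧
      coeff (i + 3) (g ^ i) = i * coeff 4 g := by
  simp only [coeff_pow_add_eq_coeff_shift_pow hg0]
  simpa using coeff_pow_of_constantCoeff_eq_one (u := mk fun p => coeff (p + 1) g)
    (by simpa using hg1) (by simpa using hg2) i

variable {f : R⟦X⟧} {n : ℕ} (hf : X ^ n ∣ f)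
include hf

theorem X_pow_add_two_dvd_comp_sub_self : X ^ (n + 2) ∣ f.comp g - f := by
  refine X_pow_dvd_iff.mpr fun N hN ↦ ?_
  rw [map_sub, sub_eq_zero]
  rcases Nat.lt_or_ge N n with hNn | hNn
  · have := coeff_add_comp_of_X_pow_dvd (g := g) ((pow_dvd_pow X hNn.le).trans hf) 0
    simpa [coeff_pow_self hg0 hg1] using this
  · obtain ⟨k, rfl⟩ := Nat.exists_eq_add_of_le hNn
    obtain rfl | rfl : k = 0 ∨ k = 1 := by omega
    · simpa [coeff_pow_self hg0 hg1] using coeff_add_comp_of_X_pow_dvd (g := g) hf 0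
    · have := coeff_add_comp_of_X_pow_dvd (g := g) hf 1
      simpa [Finset.sum_range_succ, coeff_pow_self hg0 hg1,
        (coeff_pow_add_one_two_three hg0 hg1 hg2 n).1] using this

theorem coeff_add_two_comp_sub_self :
    coeff (n + 2) (f.comp g - f) = n * coeff 3 g * coeff n f := by
  have := coeff_add_comp_of_X_pow_dvd (g := g) hf 2
  have h0 := coeff_pow_add_one_two_three hg0 hg1 hg2 n
  have h1 := coeff_pow_add_one_two_three hg0 hg1 hg2 (n + 1)
  simp only [Nat.reduceAdd, Finset.sum_range_succ, Finset.range_one, Finset.sum_singleton,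
    add_zero, h0.2.1, h1.1, mul_zero, coeff_pow_self hg0 hg1, mul_one] at this
  rw [map_sub, this]
  ring

theorem coeff_add_three_comp_sub_self :
    coeff (n + 3) (f.comp g - f) =
      n * coeff 4 g * coeff n f + (n + 1) * coeff 3 g * coeff (n + 1) f := by
  have := coeff_add_comp_of_X_pow_dvd (g := g) hf 3
  have h0 := coeff_pow_add_one_two_three hg0 hg1 hg2 n
  have h1 := coeff_pow_add_one_two_three hg0 hg1 hg2 (n + 1)
  have h2 := coeff_pow_add_one_two_three hg0 hg1 hg2 (n + 2)
  simp only [Nat.reduceAdd, Finset.sum_range_succ, Finset.range_one, Finset.sum_singleton,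
    add_zero, h0.2.2, h1.2.1, Nat.cast_add, Nat.cast_one, h2.1, mul_zero, coeff_pow_self hg0 hg1,
    mul_one] at this
  rw [map_sub, this]
  ring

end PowerSeries

open PowerSeries

theorem constantCoeff_ghat : constantCoeff ghat = 0 := by
  simp [ghat]

theorem coeff_one_ghat : coeff 1 ghat = 1 := by
  simp [ghat, coeff_X_pow, coeff_C_mul]

theorem coeff_two_ghat : coeff 2 ghat = 0 := by
  simp [ghat, coeff_X, coeff_X_pow, coeff_C_mul]

theorem coeff_three_ghat : coeff 3 ghat = MvPolynomial.X 0 := by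
  simp [ghat, coeff_X, coeff_X_pow, coeff_C_mul]

theorem coeff_four_ghat : coeff 4 ghat = MvPolynomial.X 1 := by
  simp [ghat, coeff_X, coeff_X_pow, coeff_C_mul]

theorem delta_hat_leading_coeffs (Δ : ℕ → PowerSeries Rq) (hΔ1 : Δ 1 = ghat - PowerSeries.X)
    (hΔ : ∀ m : ℕ, 1 ≤ m → Δ (m + 1) = PowerSeries.comp (Δ m) ghat - Δ m) (m : ℕ) :
    X ^ (2 * m + 3) ∣ Δ (m + 1) ∧
      coeff (2 * m + 3) (Δ (m + 1)) = (((2 * m + 1)‼ : ℕ) : Rq) * MvPolynomial.X 0 ^ (m + 1) ∧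
      coeff (2 * m + 4) (Δ (m + 1)) = MvPolynomial.X 0 ^ m * MvPolynomial.X 1 *
        ((((2 * m + 3)‼ : ℕ) : Rq) - (((2 * m + 2)‼ : ℕ) : Rq)) := by
  induction m with
  | zero =>
    refine ⟨X_pow_dvd_iff.mpr fun N hN ↦ ?_, ?_, ?_⟩
    · interval_cases N <;> simp [hΔ1, ghat, coeff_X, coeff_X_pow, coeff_C_mul]
    · simp [hΔ1, ghat, coeff_X, coeff_X_pow, coeff_C_mul]
    · norm_num [hΔ1, ghat, coeff_X, coeff_X_pow, coeff_C_mul, Nat.doubleFactorial]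
  | succ m ih =>
    obtain ⟨hdvd, h3, h4⟩ := ih
    rw [hΔ (m + 1) (by omega), show 2 * (m + 1) + 3 = 2 * m + 3 + 2 by ring,
      show 2 * (m + 1) + 4 = 2 * m + 3 + 3 by ring,
      coeff_add_two_comp_sub_self constantCoeff_ghat coeff_one_ghat coeff_two_ghat hdvd,
      coeff_add_three_comp_sub_self constantCoeff_ghat coeff_one_ghat coeff_two_ghat hdvd,
      coeff_three_ghat, coeff_four_ghat, h3, h4]
    refine ⟨X_pow_add_two_dvd_comp_sub_self constantCoeff_ghat coeff_one_ghat coeff_two_ghat hdvd,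
      ?_, ?_⟩
    · rw [show 2 * (m + 1) + 1 = 2 * m + 1 + 2 by ring, Nat.doubleFactorial_add_two]
      push_cast
      ring
    · rw [show 2 * (m + 1) + 2 = 2 * m + 2 + 2 by ring, Nat.doubleFactorial_add_two (2 * m + 3),
        Nat.doubleFactorial_add_two (2 * m + 2), show 2 * m + 3 = 2 * m + 1 + 2 by ring,
        Nat.doubleFactorial_add_two (2 * m + 1)]
      push_cast
      ring

theorem delta_hat_second_coefficient
    (Δ : ℕ → PowerSeries Rq)
    (hΔ1 : Δ 1 = ghat - PowerSeries.X)
    (hΔ : ∀ m : ℕ, 1 ≤ m → Δ (m + 1) = PowerSeries.comp (Δ m) ghat - Δ m) :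
    ∀ m : ℕ, 1 ≤ m →
      PowerSeries.coeff (R := Rq) (2 * m + 2) (Δ m) =
        MvPolynomial.X 0 ^ (m - 1) * MvPolynomial.X 1 *
          ((((2 * m + 1)‼ : ℕ) : Rq) - (((2 * m)‼ : ℕ) : Rq)) := by
  intro m hm
  obtain ⟨k, rfl⟩ := Nat.exists_eq_add_of_le' hm
  have := (delta_hat_leading_coeffs Δ hΔ1 hΔ k).2.2
  rwa [show 2 * (k + 1) + 2 = 2 * k + 4 by ring, Nat.add_sub_cancel,
    show 2 * (k + 1) + 1 = 2 * k + 3 by ring, show 2 * (k + 1) = 2 * k + 2 by ring]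
end
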